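/- arXiv:2505.16675 — 12 statements merged into one kernel-verified Lean document; each statement's English description precedes it below -/
import Mathlib

section
/- Fix μ₁ μ₂ t₁ t₂ : ℝ, v₁ v₂ > 0 and p ∈ [0,1]. For y ∈ ({1, -1} : Set ℝ) define N y := gaussianPDFReal (y * μ₁) v₁ t₁ * (p * gaussianPDFReal (y * μ₂) v₂ t₂ + (1 - p) * gaussianPDFReal (-y * μ₂) v₂ t₂), and set a := μ₁ * t₁ / v₁, b := μ₂ * t₂ / v₂, β⁺ := a + b, β⁻ := a - b. Then N 1 / (N 1 + N (-1)) = (p * Real.exp β⁺ + (1 - p) * Real.exp β⁻) / ((p * Real.exp β⁺ + (1 - p) * Real.exp β⁻) + (p * Real.exp (-β⁺) + (1 - p) * Real.exp (-β⁻))). (This is the Bayes posterior of the label y = +1 under a uniform prior on y ∈ {-1,+1} when the causal feature has class-conditional density N(y·μ₁, v₁) and the spurious feature has density N(ȳ·μ₂, v₂), where ȳ = y with probability p and ȳ = -y with probability 1 - p.) -/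
open ProbabilityTheory
open scoped NNReal

open Real in
lemma gauss_exp_split (μ v t : ℝ) (hv : 0 < v) :
    Real.exp (-(t - μ)^2 / (2 * v)) =
      Real.exp (-(t^2 + μ^2) / (2 * v)) * Real.exp (μ * t / v) := by
  rw [← Real.exp_add]
  congr 1
  field_simp
  ring

/-- Bayes posterior of the label `y = +1` under a uniform prior on `y ∈ {-1, +1}`
when the causal feature has class-conditional density `N(y·μ₁, v₁)` and the spurious
feature has density `N(ȳ·μ₂, v₂)`, where `ȳ = y` with probability `p` and `ȳ = -y`
with probability `1 - p`. -/
theorem bayes_posterior_spurious (μ₁ μ₂ t₁ t₂ : ℝ) (v₁ v₂ : ℝ≥0)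
    (hv₁ : 0 < v₁) (hv₂ : 0 < v₂) (p : ℝ) (hp0 : 0 ≤ p) (hp1 : p ≤ 1)
    (N : ℝ → ℝ)
    (hN : ∀ y ∈ ({1, -1} : Set ℝ),
      N y = gaussianPDFReal (y * μ₁) v₁ t₁ *
        (p * gaussianPDFReal (y * μ₂) v₂ t₂ +
          (1 - p) * gaussianPDFReal (-y * μ₂) v₂ t₂)) :
    N 1 / (N 1 + N (-1)) =
      (p * Real.exp (μ₁ * t₁ / (v₁ : ℝ) + μ₂ * t₂ / (v₂ : ℝ)) +
          (1 - p) * Real.exp (μ₁ * t₁ / (v₁ : ℝ) - μ₂ * t₂ / (v₂ : ℝ))) /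
        ((p * Real.exp (μ₁ * t₁ / (v₁ : ℝ) + μ₂ * t₂ / (v₂ : ℝ)) +
            (1 - p) * Real.exp (μ₁ * t₁ / (v₁ : ℝ) - μ₂ * t₂ / (v₂ : ℝ))) +
          (p * Real.exp (-(μ₁ * t₁ / (v₁ : ℝ) + μ₂ * t₂ / (v₂ : ℝ))) +
            (1 - p) * Real.exp (-(μ₁ * t₁ / (v₁ : ℝ) - μ₂ * t₂ / (v₂ : ℝ))))) := by
  have hv₁' : (0:ℝ) < v₁ := hv₁
  have hv₂' : (0:ℝ) < v₂ := hv₂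
  have hπ := Real.pi_pos
  have h1 := hN 1 (by left; rfl)
  have h2 := hN (-1) (by right; rfl)
  set a := μ₁ * t₁ / (v₁ : ℝ) with ha
  set b := μ₂ * t₂ / (v₂ : ℝ) with hb
  set K := (Real.sqrt (2 * Real.pi * v₁))⁻¹ * (Real.sqrt (2 * Real.pi * v₂))⁻¹ *
      Real.exp (-(t₁^2 + μ₁^2) / (2 * (v₁:ℝ))) * Real.exp (-(t₂^2 + μ₂^2) / (2 * (v₂:ℝ))) with hK
  have hKpos : 0 < K := by positivity
  set A := p * Real.exp (a + b) + (1 - p) * Real.exp (a - b) with hA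
  set B := p * Real.exp (-(a + b)) + (1 - p) * Real.exp (-(a - b)) with hB
  have hN1 : N 1 = K * A := by
    rw [h1]
    simp only [gaussianPDFReal, one_mul, neg_mul]
    rw [gauss_exp_split μ₁ v₁ t₁ hv₁', gauss_exp_split μ₂ v₂ t₂ hv₂',
      show -(t₂ - -μ₂)^2 / (2*(v₂:ℝ)) = -(t₂ - (-μ₂))^2 / (2*(v₂:ℝ)) by ring_nf,
      gauss_exp_split (-μ₂) v₂ t₂ hv₂']
    rw [hK, hA, ha, hb]
    simp only [neg_mul, neg_div, Real.exp_add, Real.exp_sub, Real.exp_neg]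
    have e1 : Real.exp (μ₁ * t₁ / (v₁:ℝ)) ≠ 0 := Real.exp_ne_zero _
    have e2 : Real.exp (μ₂ * t₂ / (v₂:ℝ)) ≠ 0 := Real.exp_ne_zero _
    field_simp
  have hN2 : N (-1) = K * B := by
    rw [h2]
    simp only [gaussianPDFReal, neg_mul, one_mul, neg_neg]
    rw [show -(t₁ - -μ₁)^2 / (2*(v₁:ℝ)) = -(t₁ - (-μ₁))^2 / (2*(v₁:ℝ)) by ring_nf,
      gauss_exp_split (-μ₁) v₁ t₁ hv₁',
      show -(t₂ - -μ₂)^2 / (2*(v₂:ℝ)) = -(t₂ - (-μ₂))^2 / (2*(v₂:ℝ)) by ring_nf,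
      gauss_exp_split (-μ₂) v₂ t₂ hv₂', gauss_exp_split μ₂ v₂ t₂ hv₂']
    rw [hK, hB, ha, hb]
    simp only [neg_mul, neg_div, Real.exp_add, Real.exp_sub, Real.exp_neg]
    have e1 : Real.exp (μ₁ * t₁ / (v₁:ℝ)) ≠ 0 := Real.exp_ne_zero _
    have e2 : Real.exp (μ₂ * t₂ / (v₂:ℝ)) ≠ 0 := Real.exp_ne_zero _
    field_simp
  rw [hN1, hN2, ← mul_add, mul_div_mul_left _ _ (ne_of_gt hKpos)]
end

section
/- Fix μ₁ μ₂ t₁ t₂ : ℝ and v₁ v₂ > 0. For y ∈ ({1, -1} : Set ℝ) define N y := gaussianPDFReal (y * μ₁) v₁ t₁ * ((1/2) * gaussianPDFReal (y * μ₂) v₂ t₂ + (1/2) * gaussianPDFReal (-y * μ₂) v₂ t₂). Then N 1 / (N 1 + N (-1)) = 1 / (1 + Real.exp (-(2 * μ₁ * t₁) / v₁)). In particular the posterior does not depend on t₂: when the spurious correlation probability equals 1/2, the Bayes-optimal classifier assigns zero weight to the spurious (non-causal) feature. -/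
open ProbabilityTheory
open scoped NNReal

/-!
Flipping the sign of the mean of a Gaussian density multiplies it by `exp (-2 μ t / v)`, since
`(t + μ)² = (t - μ)² + 4 μ t`. So `N (-1) = N 1 * exp (-2 μ₁ t₁ / v₁)`: the factor coming from the
spurious feature is the even mixture `½ φ(μ₂) + ½ φ(-μ₂)`, which is the same for both labels and
cancels from the posterior.
-/

lemma gaussianPDFReal_neg_mean (μ : ℝ) (v : ℝ≥0) (t : ℝ) :
    gaussianPDFReal (-μ) v t = gaussianPDFReal μ v t * Real.exp (-(2 * μ * t) / v) := by
  simp only [gaussianPDFReal]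
  rw [mul_assoc _ (Real.exp _), ← Real.exp_add]
  congr 2
  ring

/-- When the spurious correlation probability equals `1/2`, the Bayes-optimal
classifier assigns zero weight to the spurious (non-causal) feature: the posterior
of the label `y = +1` does not depend on the spurious feature `t₂`. -/
theorem bayes_posterior_spurious_half (μ₁ μ₂ t₁ t₂ : ℝ) (v₁ v₂ : ℝ≥0)
    (hv₁ : 0 < v₁) (hv₂ : 0 < v₂)
    (N : ℝ → ℝ)
    (hN : ∀ y ∈ ({1, -1} : Set ℝ),
      N y = gaussianPDFReal (y * μ₁) v₁ t₁ *
        ((1 / 2) * gaussianPDFReal (y * μ₂) v₂ t₂ +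
          (1 / 2) * gaussianPDFReal (-y * μ₂) v₂ t₂)) :
    N 1 / (N 1 + N (-1)) = 1 / (1 + Real.exp (-(2 * μ₁ * t₁) / (v₁ : ℝ))) := by
  set C := (1 / 2) * gaussianPDFReal μ₂ v₂ t₂ + (1 / 2) * gaussianPDFReal (-μ₂) v₂ t₂
  have hC_pos : 0 < C := by
    have := gaussianPDFReal_pos μ₂ v₂ t₂ hv₂.ne'
    have := gaussianPDFReal_pos (-μ₂) v₂ t₂ hv₂.ne'
    positivity
  have hφ₁_pos := gaussianPDFReal_pos μ₁ v₁ t₁ hv₁.ne'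
  have hN₁ : N 1 = gaussianPDFReal μ₁ v₁ t₁ * C := by
    rw [hN 1 (by simp), one_mul, one_mul, neg_one_mul]
  have hN₂ : N (-1) = gaussianPDFReal μ₁ v₁ t₁ * C * Real.exp (-(2 * μ₁ * t₁) / v₁) := by
    rw [hN (-1) (by simp)]
    simp only [neg_neg, neg_one_mul, one_mul, gaussianPDFReal_neg_mean μ₁, C]
    ring
  rw [hN₁, hN₂, ← mul_one_add, div_mul_cancel_left₀ (by positivity), one_div]
end

section
/- Fix μ₁ t₁ : ℝ, v₁ v₂ > 0, μ₂ ≠ 0 and p ∈ [0,1] with p ≠ 1/2. For y ∈ ({1, -1} : Set ℝ) and t₂ : ℝ define N y t₂ := gaussianPDFReal (y * μ₁) v₁ t₁ * (p * gaussianPDFReal (y * μ₂) v₂ t₂ + (1 - p) * gaussianPDFReal (-y * μ₂) v₂ t₂). Then the function t₂ ↦ N 1 t₂ / (N 1 t₂ + N (-1) t₂) is not constant on ℝ: when the spurious correlation probability differs from 1/2, the Bayes-optimal classifier assigns non-zero weight to the spurious (non-causal) feature. -/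
open ProbabilityTheory
open scoped NNReal

/-- When the spurious correlation probability differs from `1/2`, the Bayes-optimal
classifier assigns non-zero weight to the spurious (non-causal) feature: the posterior
of the label `y = +1`, viewed as a function of the spurious feature `t₂`, is not
constant on `ℝ`. -/
theorem bayes_posterior_spurious_not_constant (μ₁ t₁ : ℝ) (v₁ v₂ : ℝ≥0)
    (hv₁ : 0 < v₁) (hv₂ : 0 < v₂) (μ₂ : ℝ) (hμ₂ : μ₂ ≠ 0)
    (p : ℝ) (hp0 : 0 ≤ p) (hp1 : p ≤ 1) (hp : p ≠ 1 / 2)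
    (N : ℝ → ℝ → ℝ)
    (hN : ∀ y ∈ ({1, -1} : Set ℝ), ∀ t₂ : ℝ,
      N y t₂ = gaussianPDFReal (y * μ₁) v₁ t₁ *
        (p * gaussianPDFReal (y * μ₂) v₂ t₂ +
          (1 - p) * gaussianPDFReal (-y * μ₂) v₂ t₂)) :
    ¬ ∃ c : ℝ, ∀ t₂ : ℝ,
        N 1 t₂ / (N 1 t₂ + N (-1) t₂) = c := by
  rintro ⟨c, hc⟩
  have h1 := hN 1 (by simp)
  have h2 := hN (-1) (by simp)
  set A : ℝ := gaussianPDFReal (1 * μ₁) v₁ t₁ with hA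
  set B : ℝ := gaussianPDFReal (-1 * μ₁) v₁ t₁ with hB
  have hApos : 0 < A := gaussianPDFReal_pos _ _ _ hv₁.ne'
  have hBpos : 0 < B := gaussianPDFReal_pos _ _ _ hv₁.ne'
  set a : ℝ := (Real.sqrt (2 * Real.pi * v₂))⁻¹ with ha
  set b : ℝ := a * Real.exp (-(2 * μ₂) ^ 2 / (2 * v₂)) with hb
  have hapos : 0 < a := by
    rw [ha]
    have : (0:ℝ) < 2 * Real.pi * v₂ := by positivity
    positivity
  have hbpos : 0 < b := by rw [hb]; positivity
  have hba : b < a := by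
    rw [hb]
    have h : Real.exp (-(2 * μ₂) ^ 2 / (2 * v₂)) < 1 := by
      rw [Real.exp_lt_one_iff]
      have : (0:ℝ) < (2 * μ₂) ^ 2 := by positivity
      have hv : (0:ℝ) < 2 * v₂ := by positivity
      exact div_neg_of_neg_of_pos (by linarith) hv
    nlinarith
  -- values of the gaussian at ±μ₂
  have g1 : gaussianPDFReal (1 * μ₂) v₂ μ₂ = a := by
    simp [gaussianPDFReal, ha]
  have g2 : gaussianPDFReal (-(1:ℝ) * μ₂) v₂ μ₂ = b := by
    rw [gaussianPDFReal, hb, ha]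
    ring_nf
  have g3 : gaussianPDFReal (1 * μ₂) v₂ (-μ₂) = b := by
    rw [gaussianPDFReal, hb, ha]
    ring_nf
  have g4 : gaussianPDFReal (-(1:ℝ) * μ₂) v₂ (-μ₂) = a := by
    rw [gaussianPDFReal, ha]
    ring_nf
    simp
  have g5 : gaussianPDFReal (-(-1:ℝ) * μ₂) v₂ μ₂ = a := by
    norm_num; rw [← g1]; norm_num
  have g6 : gaussianPDFReal (-(-1:ℝ) * μ₂) v₂ (-μ₂) = b := by
    norm_num; rw [← g3]; norm_num
  have e1 : N 1 μ₂ = A * (p * a + (1 - p) * b) := by rw [h1 μ₂, g1, g2]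
  have e2 : N (-1) μ₂ = B * (p * b + (1 - p) * a) := by rw [h2 μ₂, g5]; rw [show gaussianPDFReal (-1 * μ₂) v₂ μ₂ = b from by rw [← g2]]
  have e3 : N 1 (-μ₂) = A * (p * b + (1 - p) * a) := by rw [h1 (-μ₂), g3, g4]
  have e4 : N (-1) (-μ₂) = B * (p * a + (1 - p) * b) := by rw [h2 (-μ₂), g6]; rw [show gaussianPDFReal (-1 * μ₂) v₂ (-μ₂) = a from by rw [← g4]]
  clear_value A B a b
  set x : ℝ := p * a + (1 - p) * b with hx
  set y : ℝ := p * b + (1 - p) * a with hy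
  have hxpos : 0 < x := by nlinarith
  have hypos : 0 < y := by nlinarith
  have hxy : x ≠ y := by
    intro h
    apply hp
    have : (2 * p - 1) * (a - b) = 0 := by nlinarith [h]
    rcases mul_eq_zero.mp this with h' | h'
    · linarith
    · exfalso; linarith
  clear_value x y
  have hd1 : A * x + B * y > 0 := by have := mul_pos hApos hxpos; have := mul_pos hBpos hypos; linarith
  have hd2 : A * y + B * x > 0 := by have := mul_pos hApos hypos; have := mul_pos hBpos hxpos; linarith
  have hc1 := hc μ₂
  have hc2 := hc (-μ₂)
  rw [e1, e2] at hc1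
  rw [e3, e4] at hc2
  rw [div_eq_iff (by linarith)] at hc1 hc2
  apply hxy
  have key : A * x * (A * y + B * x) = A * y * (A * x + B * y) := by
    linear_combination (A * y + B * x) * hc1 - (A * x + B * y) * hc2
  have hz : (A * B * (x + y)) * (x - y) = 0 := by linear_combination key
  have hne : A * B * (x + y) ≠ 0 :=
    (mul_pos (mul_pos hApos hBpos) (by linarith : (0:ℝ) < x + y)).ne'
  rcases mul_eq_zero.mp hz with h | h
  · exact absurd h hne
  · linarith
end

section
/- Let pE and pPI be full-support pmfs on X × Y × S such that: (i) they share the generating mechanism, i.e. pE(x|y,s) = pPI(x|y,s) for all x, y, s; (ii) under pPI, Y and S are independent, i.e. pPI(y,s) = pPI(y) · pPI(s) for all y, s; (iii) under pPI, Y and S are conditionally independent given X, i.e. pPI(x,y,s)/pPI(x) = pPI(y|x) · pPI(s|x) for all x, y, s. Then the cross-entropy risk of the pPI-posterior evaluated under pE decomposes as: −∑_{x,y} pE(x,y) · Real.log (pPI(y|x)) = −∑_y pE(y) · Real.log (pPI(y)) − ∑_{y,s} pE(y,s) · KL((x ↦ pPI(x|y,s)) ‖ (x ↦ pPI(x|s))).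 -/
/-!
Write `q = pPI`. Independence of `Y` and `S` together with their conditional independence given
`X` turn the likelihood ratio of the KL term into a ratio of posterior to prior:
`q(x|y,s) / q(x|s) = q(y|x) / q(y)`. Since `pE` shares the mechanism, `pE(y,s) q(x|y,s) = pE(x,y,s)`,
so the expected KL divergence is `∑ pE(x,y,s) (log q(y|x) - log q(y))`, the difference of the two
cross-entropy risks.
-/

open Finset Real

theorem Finset.sum_univ_pos_of_forall_pos {ι : Type*} [Fintype ι] {f : ι → ℝ}
    (hf : ∀ i, 0 < f i) (i : ι) : 0 < ∑ j, f j :=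
  sum_pos (fun j _ => hf j) ⟨i, mem_univ i⟩

section Marginals

variable {X Y S : Type*} [Fintype X] [Fintype Y] [Fintype S]

theorem sum_mul_sub_eq_sub_marginal (p : X → Y → S → ℝ) (f : X → Y → ℝ) (g : Y → ℝ) :
    ∑ y, ∑ s, ∑ x, p x y s * (f x y - g y) =
      ∑ x, ∑ y, (∑ s, p x y s) * f x y - ∑ y, (∑ x, ∑ s, p x y s) * g y := by
  simp only [mul_sub, sum_sub_distrib, sum_mul]
  congr 1
  · exact (sum_congr rfl fun y _ => sum_comm).trans sum_comm
  · exact sum_congr rfl fun y _ => sum_comm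

/-- `log (q(x|y,s) / q(x|s)) = log q(y|x) - log q(y)`. -/
theorem log_posterior_ratio_eq_of_indep_of_condIndep (q : X → Y → S → ℝ)
    (hq : ∀ x y s, 0 < q x y s) (x : X) (y : Y) (s : S)
    (hind : ∑ x, q x y s = (∑ x, ∑ s', q x y s') * (∑ x, ∑ y', q x y' s))
    (hcind : q x y s / (∑ y', ∑ s', q x y' s') =
      ((∑ s', q x y s') / (∑ y', ∑ s', q x y' s')) *
        ((∑ y', q x y' s) / (∑ y', ∑ s', q x y' s'))) :
    log ((q x y s / (∑ x', q x' y s)) / ((∑ y', q x y' s) / (∑ x', ∑ y', q x' y' s))) =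
      log ((∑ s', q x y s') / (∑ y', ∑ s', q x y' s')) - log (∑ x', ∑ s', q x' y s') := by
  have hqx : 0 < ∑ y', ∑ s', q x y' s' :=
    sum_univ_pos_of_forall_pos (fun y => sum_univ_pos_of_forall_pos (hq x y) s) y
  have hqs : 0 < ∑ x', ∑ y', q x' y' s :=
    sum_univ_pos_of_forall_pos (fun x => sum_univ_pos_of_forall_pos (hq x · s) y) x
  have hqy : 0 < ∑ x', ∑ s', q x' y s' :=
    sum_univ_pos_of_forall_pos (fun x => sum_univ_pos_of_forall_pos (hq x y) s) x
  have hqxs : 0 < ∑ y', q x y' s := sum_univ_pos_of_forall_pos (hq x · s) y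
  have hqxy : 0 < ∑ s', q x y s' := sum_univ_pos_of_forall_pos (hq x y) s
  have hcind' : q x y s * (∑ y', ∑ s', q x y' s') = (∑ s', q x y s') * (∑ y', q x y' s) := by
    field_simp at hcind
    linear_combination hcind
  rw [← log_div (div_pos hqxy hqx).ne' hqy.ne']
  congr 1
  rw [hind]
  field_simp
  linear_combination hcind'

end Marginals

theorem crossEntropy_risk_decomposition_general
    {X Y S : Type*} [Fintype X] [Fintype Y] [Fintype S]
    (pE pPI : X → Y → S → ℝ)
    (hEpos : ∀ x y s, 0 < pE x y s) (hPIpos : ∀ x y s, 0 < pPI x y s)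
    -- (i) shared generating mechanism: pE(x∣y,s) = pPI(x∣y,s)
    (hmech : ∀ x y s,
      pE x y s / (∑ x', pE x' y s) = pPI x y s / (∑ x', pPI x' y s))
    -- (ii) under pPI, Y and S are independent: pPI(y,s) = pPI(y)·pPI(s)
    (hind : ∀ y s, (∑ x, pPI x y s) =
      (∑ x, ∑ s', pPI x y s') * (∑ x, ∑ y', pPI x y' s))
    -- (iii) under pPI, Y ⫫ S ∣ X: pPI(x,y,s)/pPI(x) = pPI(y∣x)·pPI(s∣x)
    (hcind : ∀ x y s,
      pPI x y s / (∑ y', ∑ s', pPI x y' s') =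
        ((∑ s', pPI x y s') / (∑ y', ∑ s', pPI x y' s')) *
          ((∑ y', pPI x y' s) / (∑ y', ∑ s', pPI x y' s'))) :
    -- risk of the pPI posterior under pE
    -(∑ x, ∑ y, (∑ s, pE x y s) *
        Real.log ((∑ s, pPI x y s) / (∑ y', ∑ s, pPI x y' s))) =
      -- risk of the pPI prior under pE
      -(∑ y, (∑ x, ∑ s, pE x y s) * Real.log (∑ x, ∑ s, pPI x y s))
      -- minus the expected KL divergence
      - ∑ y, ∑ s, (∑ x, pE x y s) *
          (∑ x, (pPI x y s / (∑ x', pPI x' y s)) *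
            Real.log ((pPI x y s / (∑ x', pPI x' y s)) /
              ((∑ y', pPI x y' s) / (∑ x', ∑ y', pPI x' y' s)))) := by
  have hKL : ∀ y s, (∑ x, pE x y s) *
      (∑ x, (pPI x y s / (∑ x', pPI x' y s)) *
        Real.log ((pPI x y s / (∑ x', pPI x' y s)) /
          ((∑ y', pPI x y' s) / (∑ x', ∑ y', pPI x' y' s)))) =
      ∑ x, pE x y s * (Real.log ((∑ s', pPI x y s') / (∑ y', ∑ s', pPI x y' s')) -
        Real.log (∑ x', ∑ s', pPI x' y s')) := by
    intro y s
    rw [mul_sum]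
    refine sum_congr rfl fun x _ => ?_
    have hEys : (∑ x', pE x' y s) ≠ 0 := (sum_univ_pos_of_forall_pos (hEpos · y s) x).ne'
    have hmech' : (∑ x', pE x' y s) * (pPI x y s / ∑ x', pPI x' y s) = pE x y s := by
      rw [← hmech x y s, mul_div_cancel₀ _ hEys]
    rw [← mul_assoc, hmech',
      log_posterior_ratio_eq_of_indep_of_condIndep pPI hPIpos x y s (hind y s) (hcind x y s)]
  simp only [hKL, sum_mul_sub_eq_sub_marginal]
  ring

/-- Cross-entropy risk decomposition: for a full-support pmf `pPI` on `X × Y × S`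
under which `Y ⫫ S` and `Y ⫫ S ∣ X`, and any full-support pmf `pE` sharing the
generating mechanism `p(x∣y,s)`, the cross-entropy risk of the `pPI`-posterior
evaluated under `pE` equals the risk of the `pPI`-prior minus the expected
KL-divergence `KL(pPI(·∣y,s) ‖ pPI(·∣s))` under `pE(y,s)`. -/
theorem crossEntropy_risk_decomposition
    {X Y S : Type*} [Fintype X] [Fintype Y] [Fintype S]
    [Nonempty X] [Nonempty Y] [Nonempty S]
    (pE pPI : X → Y → S → ℝ)
    (hEpos : ∀ x y s, 0 < pE x y s) (hPIpos : ∀ x y s, 0 < pPI x y s)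
    (hEsum : ∑ x, ∑ y, ∑ s, pE x y s = 1)
    (hPIsum : ∑ x, ∑ y, ∑ s, pPI x y s = 1)
    -- (i) shared generating mechanism: pE(x∣y,s) = pPI(x∣y,s)
    (hmech : ∀ x y s,
      pE x y s / (∑ x', pE x' y s) = pPI x y s / (∑ x', pPI x' y s))
    -- (ii) under pPI, Y and S are independent: pPI(y,s) = pPI(y)·pPI(s)
    (hind : ∀ y s, (∑ x, pPI x y s) =
      (∑ x, ∑ s', pPI x y s') * (∑ x, ∑ y', pPI x y' s))
    -- (iii) under pPI, Y ⫫ S ∣ X: pPI(x,y,s)/pPI(x) = pPI(y∣x)·pPI(s∣x)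
    (hcind : ∀ x y s,
      pPI x y s / (∑ y', ∑ s', pPI x y' s') =
        ((∑ s', pPI x y s') / (∑ y', ∑ s', pPI x y' s')) *
          ((∑ y', pPI x y' s) / (∑ y', ∑ s', pPI x y' s'))) :
    -- risk of the pPI posterior under pE
    -(∑ x, ∑ y, (∑ s, pE x y s) *
        Real.log ((∑ s, pPI x y s) / (∑ y', ∑ s, pPI x y' s))) =
      -- risk of the pPI prior under pE
      -(∑ y, (∑ x, ∑ s, pE x y s) * Real.log (∑ x, ∑ s, pPI x y s))
      -- minus the expected KL divergence
      - ∑ y, ∑ s, (∑ x, pE x y s) *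
          (∑ x, (pPI x y s / (∑ x', pPI x' y s)) *
            Real.log ((pPI x y s / (∑ x', pPI x' y s)) /
              ((∑ y', pPI x y' s) / (∑ x', ∑ y', pPI x' y' s)))) :=
  crossEntropy_risk_decomposition_general pE pPI hEpos hPIpos hmech hind hcind
end

section
/- Let pE and pPI be full-support pmfs on X × Y × S such that: (i) they share the generating mechanism, i.e. pE(x|y,s) = pPI(x|y,s) for all x, y, s; (ii) under pPI, Y and S are independent, i.e. pPI(y,s) = pPI(y) · pPI(s) for all y, s; (iii) under pPI, Y and S are conditionally independent given X, i.e. pPI(x,y,s)/pPI(x) = pPI(y|x) · pPI(s|x) for all x, y, s. Then −∑_{x,y} pE(x,y) · Real.log (pPI(y|x)) ≤ −∑_y pE(y) · Real.log (pPI(y)); that is, in every environment sharing the mechanism, the classifier obtained from the post-intervention distribution performs at least as well (in cross-entropy risk) as predicting with the pPI prior alone. -/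
/-!
With `r(x,y) = pPI(x,y) / (pPI(x) pPI(y))` (the exponential of the pointwise mutual information),
the claim reads `0 ≤ ∑ pE(x,y) log r(x,y)`. By `log r ≥ 1 - 1/r` it suffices that
`∑ pE(x,y) / r(x,y) ≤ ∑ pE(x,y)`. Factorizing `pPI(x,y,s)` through (ii) and (iii) and transporting
it to `pE` through the shared mechanism (i) gives `pE(x,y) / r(x,y) = ∑ₛ pE(y,s) pPI(x|s)`, whose
sum over `x` and `y` is the total mass of `pE`.
-/

open Finset

lemma sum_mul_log_nonneg_of_sum_div_le {ι : Type*} (t : Finset ι) {p r : ι → ℝ}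
    (hp : ∀ i ∈ t, 0 ≤ p i) (hr : ∀ i ∈ t, 0 < r i)
    (h : ∑ i ∈ t, p i / r i ≤ ∑ i ∈ t, p i) :
    0 ≤ ∑ i ∈ t, p i * Real.log (r i) := by
  have hterm : ∀ i ∈ t, p i - p i / r i ≤ p i * Real.log (r i) := fun i hi => by
    calc p i - p i / r i = p i * (1 - (r i)⁻¹) := by ring
      _ ≤ p i * Real.log (r i) :=
        mul_le_mul_of_nonneg_left (Real.one_sub_inv_le_log_of_pos (hr i hi)) (hp i hi)
  calc (0 : ℝ) ≤ ∑ i ∈ t, (p i - p i / r i) := by rw [sum_sub_distrib]; linarith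
    _ ≤ ∑ i ∈ t, p i * Real.log (r i) := sum_le_sum hterm

section Marginals

variable {X Y S : Type*}

def marginalXY [Fintype S] (p : X → Y → S → ℝ) (x : X) (y : Y) : ℝ := ∑ s, p x y s
def marginalXS [Fintype Y] (p : X → Y → S → ℝ) (x : X) (s : S) : ℝ := ∑ y, p x y s
def marginalYS [Fintype X] (p : X → Y → S → ℝ) (y : Y) (s : S) : ℝ := ∑ x, p x y s
def marginalX [Fintype Y] [Fintype S] (p : X → Y → S → ℝ) (x : X) : ℝ := ∑ y, ∑ s, p x y s
def marginalY [Fintype X] [Fintype S] (p : X → Y → S → ℝ) (y : Y) : ℝ := ∑ x, ∑ s, p x y s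
def marginalS [Fintype X] [Fintype Y] (p : X → Y → S → ℝ) (s : S) : ℝ := ∑ x, ∑ y, p x y s

noncomputable def pmiRatio [Fintype X] [Fintype Y] [Fintype S] (p : X → Y → S → ℝ) (x : X)
    (y : Y) : ℝ :=
  marginalXY p x y / (marginalX p x * marginalY p y)

variable {p : X → Y → S → ℝ}

lemma marginalXY_pos [Fintype S] [Nonempty S] (hp : ∀ x y s, 0 < p x y s) (x : X) (y : Y) :
    0 < marginalXY p x y :=
  sum_pos (fun s _ => hp x y s) univ_nonempty

lemma marginalYS_pos [Fintype X] [Nonempty X] (hp : ∀ x y s, 0 < p x y s) (y : Y) (s : S) :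
    0 < marginalYS p y s :=
  sum_pos (fun x _ => hp x y s) univ_nonempty

lemma marginalX_pos [Fintype Y] [Fintype S] [Nonempty Y] [Nonempty S]
    (hp : ∀ x y s, 0 < p x y s) (x : X) : 0 < marginalX p x :=
  sum_pos (fun y _ => marginalXY_pos hp x y) univ_nonempty

lemma marginalY_pos [Fintype X] [Fintype S] [Nonempty X] [Nonempty S]
    (hp : ∀ x y s, 0 < p x y s) (y : Y) : 0 < marginalY p y :=
  sum_pos (fun x _ => marginalXY_pos hp x y) univ_nonempty

lemma marginalS_pos [Fintype X] [Fintype Y] [Nonempty X] [Nonempty Y]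
    (hp : ∀ x y s, 0 < p x y s) (s : S) : 0 < marginalS p s :=
  sum_pos (fun x _ => sum_pos (fun y _ => hp x y s) univ_nonempty) univ_nonempty

lemma pmiRatio_pos [Fintype X] [Fintype Y] [Fintype S] [Nonempty X] [Nonempty Y] [Nonempty S]
    (hp : ∀ x y s, 0 < p x y s) (x : X) (y : Y) : 0 < pmiRatio p x y :=
  div_pos (marginalXY_pos hp x y) (mul_pos (marginalX_pos hp x) (marginalY_pos hp y))

lemma log_pmiRatio [Fintype X] [Fintype Y] [Fintype S] [Nonempty X] [Nonempty Y] [Nonempty S]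
    (hp : ∀ x y s, 0 < p x y s) (x : X) (y : Y) :
    Real.log (pmiRatio p x y) =
      Real.log (marginalXY p x y / marginalX p x) - Real.log (marginalY p y) := by
  have hcond : 0 < marginalXY p x y / marginalX p x :=
    div_pos (marginalXY_pos hp x y) (marginalX_pos hp x)
  rw [pmiRatio, ← div_div, Real.log_div hcond.ne' (marginalY_pos hp y).ne']

lemma sum_sum_marginalYS [Fintype X] [Fintype Y] [Fintype S] (p : X → Y → S → ℝ) :
    ∑ y, ∑ s, marginalYS p y s = ∑ x, ∑ y, ∑ s, p x y s := by
  simp only [marginalYS]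
  symm
  rw [sum_comm]
  exact sum_congr rfl fun _ _ => sum_comm

end Marginals

section SharedMechanism

variable {X Y S : Type*} [Fintype X] [Fintype Y] [Fintype S] [Nonempty X] [Nonempty Y] [Nonempty S]
  {pE pPI : X → Y → S → ℝ}

lemma mul_marginals_eq_of_shared_mechanism
    (hEpos : ∀ x y s, 0 < pE x y s) (hPIpos : ∀ x y s, 0 < pPI x y s)
    (hmech : ∀ x y s, pE x y s / marginalYS pE y s = pPI x y s / marginalYS pPI y s)
    (hind : ∀ y s, marginalYS pPI y s = marginalY pPI y * marginalS pPI s)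
    (hcind : ∀ x y s, pPI x y s / marginalX pPI x =
      marginalXY pPI x y / marginalX pPI x * (marginalXS pPI x s / marginalX pPI x))
    (x : X) (y : Y) (s : S) :
    pE x y s * (marginalX pPI x * marginalY pPI y * marginalS pPI s) =
      marginalYS pE y s * marginalXS pPI x s * marginalXY pPI x y := by
  have hmech_mul : pE x y s * marginalYS pPI y s = pPI x y s * marginalYS pE y s :=
    (div_eq_div_iff (marginalYS_pos hEpos y s).ne' (marginalYS_pos hPIpos y s).ne').mp
      (hmech x y s)
  have hcind_mul : pPI x y s * marginalX pPI x = marginalXY pPI x y * marginalXS pPI x s := by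
    have := hcind x y s
    field_simp [(marginalX_pos hPIpos x).ne'] at this
    linear_combination this
  linear_combination marginalX pPI x * hmech_mul + marginalYS pE y s * hcind_mul
    - pE x y s * marginalX pPI x * hind y s

lemma sum_marginalXY_div_pmiRatio_of_shared_mechanism
    (hEpos : ∀ x y s, 0 < pE x y s) (hPIpos : ∀ x y s, 0 < pPI x y s)
    (hmech : ∀ x y s, pE x y s / marginalYS pE y s = pPI x y s / marginalYS pPI y s)
    (hind : ∀ y s, marginalYS pPI y s = marginalY pPI y * marginalS pPI s)
    (hcind : ∀ x y s, pPI x y s / marginalX pPI x =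
      marginalXY pPI x y / marginalX pPI x * (marginalXS pPI x s / marginalX pPI x)) :
    ∑ x, ∑ y, marginalXY pE x y / pmiRatio pPI x y = ∑ x, ∑ y, ∑ s, pE x y s := by
  have hslice : ∀ x y, marginalXY pE x y / pmiRatio pPI x y =
      ∑ s, marginalYS pE y s * (marginalXS pPI x s / marginalS pPI s) := by
    intro x y
    rw [pmiRatio, div_div_eq_mul_div, div_eq_iff (marginalXY_pos hPIpos x y).ne', marginalXY,
      sum_mul, sum_mul]
    refine sum_congr rfl fun s _ => ?_
    field_simp [(marginalS_pos hPIpos s).ne']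
    linear_combination
      mul_marginals_eq_of_shared_mechanism hEpos hPIpos hmech hind hcind x y s
  have hsum_XS : ∀ s, ∑ x, marginalXS pPI x s = marginalS pPI s := fun _ => rfl
  calc ∑ x, ∑ y, marginalXY pE x y / pmiRatio pPI x y
      = ∑ y, ∑ s, marginalYS pE y s * (∑ x, marginalXS pPI x s / marginalS pPI s) := by
        simp_rw [hslice, mul_sum]
        rw [sum_comm]
        exact sum_congr rfl fun _ _ => sum_comm
    _ = ∑ y, ∑ s, marginalYS pE y s := by
        simp_rw [← sum_div, hsum_XS, div_self (marginalS_pos hPIpos _).ne', mul_one]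
    _ = ∑ x, ∑ y, ∑ s, pE x y s := sum_sum_marginalYS pE

end SharedMechanism

theorem crossEntropy_risk_pid_le_prior_general
    {X Y S : Type*} [Fintype X] [Fintype Y] [Fintype S]
    [Nonempty X] [Nonempty Y] [Nonempty S]
    (pE pPI : X → Y → S → ℝ)
    (hEpos : ∀ x y s, 0 < pE x y s) (hPIpos : ∀ x y s, 0 < pPI x y s)
    -- (i) shared generating mechanism: pE(x∣y,s) = pPI(x∣y,s)
    (hmech : ∀ x y s,
      pE x y s / (∑ x', pE x' y s) = pPI x y s / (∑ x', pPI x' y s))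
    -- (ii) under pPI, Y and S are independent: pPI(y,s) = pPI(y)·pPI(s)
    (hind : ∀ y s, (∑ x, pPI x y s) =
      (∑ x, ∑ s', pPI x y s') * (∑ x, ∑ y', pPI x y' s))
    -- (iii) under pPI, Y ⫫ S ∣ X: pPI(x,y,s)/pPI(x) = pPI(y∣x)·pPI(s∣x)
    (hcind : ∀ x y s,
      pPI x y s / (∑ y', ∑ s', pPI x y' s') =
        ((∑ s', pPI x y s') / (∑ y', ∑ s', pPI x y' s')) *
          ((∑ y', pPI x y' s) / (∑ y', ∑ s', pPI x y' s'))) :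
    -(∑ x, ∑ y, (∑ s, pE x y s) *
        Real.log ((∑ s, pPI x y s) / (∑ y', ∑ s, pPI x y' s))) ≤
      -(∑ y, (∑ x, ∑ s, pE x y s) * Real.log (∑ x, ∑ s, pPI x y s)) := by
  have hgibbs := sum_mul_log_nonneg_of_sum_div_le univ
    (p := fun q : X × Y => marginalXY pE q.1 q.2) (r := fun q => pmiRatio pPI q.1 q.2)
    (fun q _ => (marginalXY_pos hEpos q.1 q.2).le) (fun q _ => pmiRatio_pos hPIpos q.1 q.2)
    (by
      simp only [Fintype.sum_prod_type]
      exact (sum_marginalXY_div_pmiRatio_of_shared_mechanism hEpos hPIpos hmech hind hcind).le)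
  simp only [Fintype.sum_prod_type, log_pmiRatio hPIpos, mul_sub, sum_sub_distrib] at hgibbs
  rw [neg_le_neg_iff, ← sub_nonneg]
  convert hgibbs using 2
  · rfl
  · simp only [marginalXY, marginalY, sum_mul]
    exact sum_comm

/-- In every environment `pE` sharing the generating mechanism with a
post-intervention distribution `pPI` (under which `Y ⫫ S` and `Y ⫫ S ∣ X`),
the classifier obtained from `pPI` performs at least as well, in cross-entropy
risk, as predicting with the `pPI` prior alone. -/
theorem crossEntropy_risk_pid_le_prior
    {X Y S : Type*} [Fintype X] [Fintype Y] [Fintype S]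
    [Nonempty X] [Nonempty Y] [Nonempty S]
    (pE pPI : X → Y → S → ℝ)
    (hEpos : ∀ x y s, 0 < pE x y s) (hPIpos : ∀ x y s, 0 < pPI x y s)
    (hEsum : ∑ x, ∑ y, ∑ s, pE x y s = 1)
    (hPIsum : ∑ x, ∑ y, ∑ s, pPI x y s = 1)
    -- (i) shared generating mechanism: pE(x∣y,s) = pPI(x∣y,s)
    (hmech : ∀ x y s,
      pE x y s / (∑ x', pE x' y s) = pPI x y s / (∑ x', pPI x' y s))
    -- (ii) under pPI, Y and S are independent: pPI(y,s) = pPI(y)·pPI(s)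
    (hind : ∀ y s, (∑ x, pPI x y s) =
      (∑ x, ∑ s', pPI x y s') * (∑ x, ∑ y', pPI x y' s))
    -- (iii) under pPI, Y ⫫ S ∣ X: pPI(x,y,s)/pPI(x) = pPI(y∣x)·pPI(s∣x)
    (hcind : ∀ x y s,
      pPI x y s / (∑ y', ∑ s', pPI x y' s') =
        ((∑ s', pPI x y s') / (∑ y', ∑ s', pPI x y' s')) *
          ((∑ y', pPI x y' s) / (∑ y', ∑ s', pPI x y' s'))) :
    -(∑ x, ∑ y, (∑ s, pE x y s) *
        Real.log ((∑ s, pPI x y s) / (∑ y', ∑ s, pPI x y' s))) ≤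
      -(∑ y, (∑ x, ∑ s, pE x y s) * Real.log (∑ x, ∑ s, pPI x y s)) :=
  crossEntropy_risk_pid_le_prior_general pE pPI hEpos hPIpos hmech hind hcind
end

section
/- Let pE and pPI be full-support pmfs on X × Y × S such that: (i) they share the generating mechanism, i.e. pE(x|y,s) = pPI(x|y,s) for all x, y, s; (ii) both have the uniform Y-marginal, i.e. pE(y) = 1/|Y| and pPI(y) = 1/|Y| for all y; (iii) under each of pE and pPI, Y and S are independent, i.e. p(y,s) = p(y) · p(s) for all y, s; (iv) under each of pE and pPI, Y and S are conditionally independent given X, i.e. p(x,y,s)/p(x) = p(y|x) · p(s|x) for all x, y, s. Then the posteriors coincide: pE(y|x) = pPI(y|x) for all x, y. -/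
open Finset

/-- If two full-support pmfs on `X × Y × S` share the generating mechanism, both have
the uniform `Y`-marginal, and under each of them `Y ⫫ S` and `Y ⫫ S ∣ X`, then their
posteriors `p(y∣x)` coincide. -/
theorem pid_posteriors_coincide
    {X Y S : Type*} [Fintype X] [Fintype Y] [Fintype S]
    [Nonempty X] [Nonempty Y] [Nonempty S]
    (pE pPI : X → Y → S → ℝ)
    (hEpos : ∀ x y s, 0 < pE x y s) (hPIpos : ∀ x y s, 0 < pPI x y s)
    (hEsum : ∑ x, ∑ y, ∑ s, pE x y s = 1)
    (hPIsum : ∑ x, ∑ y, ∑ s, pPI x y s = 1)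
    -- (i) shared generating mechanism: pE(x∣y,s) = pPI(x∣y,s)
    (hmech : ∀ x y s,
      pE x y s / (∑ x', pE x' y s) = pPI x y s / (∑ x', pPI x' y s))
    -- (ii) uniform Y-marginals
    (hEuniform : ∀ y, ∑ x, ∑ s, pE x y s = 1 / (Fintype.card Y : ℝ))
    (hPIuniform : ∀ y, ∑ x, ∑ s, pPI x y s = 1 / (Fintype.card Y : ℝ))
    -- (iii) under each, Y and S are independent: p(y,s) = p(y)·p(s)
    (hEind : ∀ y s, (∑ x, pE x y s) =
      (∑ x, ∑ s', pE x y s') * (∑ x, ∑ y', pE x y' s))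
    (hPIind : ∀ y s, (∑ x, pPI x y s) =
      (∑ x, ∑ s', pPI x y s') * (∑ x, ∑ y', pPI x y' s))
    -- (iv) under each, Y ⫫ S ∣ X: p(x,y,s)/p(x) = p(y∣x)·p(s∣x)
    (hEcind : ∀ x y s,
      pE x y s / (∑ y', ∑ s', pE x y' s') =
        ((∑ s', pE x y s') / (∑ y', ∑ s', pE x y' s')) *
          ((∑ y', pE x y' s) / (∑ y', ∑ s', pE x y' s')))
    (hPIcind : ∀ x y s,
      pPI x y s / (∑ y', ∑ s', pPI x y' s') =
        ((∑ s', pPI x y s') / (∑ y', ∑ s', pPI x y' s')) *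
          ((∑ y', pPI x y' s) / (∑ y', ∑ s', pPI x y' s'))) :
    ∀ x y, (∑ s, pE x y s) / (∑ y', ∑ s, pE x y' s) =
      (∑ s, pPI x y s) / (∑ y', ∑ s, pPI x y' s) := by
  classical
  have hcard : (0:ℝ) < (Fintype.card Y : ℝ) := by
    exact_mod_cast Fintype.card_pos
  have huX : (Finset.univ : Finset X).Nonempty := univ_nonempty
  have huY : (Finset.univ : Finset Y).Nonempty := univ_nonempty
  have huS : (Finset.univ : Finset S).Nonempty := univ_nonempty
  have hqE : ∀ s, 0 < ∑ x', ∑ y', pE x' y' s := fun s =>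
    Finset.sum_pos (fun _ _ => Finset.sum_pos (fun _ _ => hEpos _ _ _) huY) huX
  have hqPI : ∀ s, 0 < ∑ x', ∑ y', pPI x' y' s := fun s =>
    Finset.sum_pos (fun _ _ => Finset.sum_pos (fun _ _ => hPIpos _ _ _) huY) huX
  have hEys : ∀ b s, (∑ x', pE x' b s) = (∑ x', ∑ y', pE x' y' s) / (Fintype.card Y : ℝ) := by
    intro b s
    rw [hEind b s, hEuniform b]; ring
  have hPIys : ∀ b s, (∑ x', pPI x' b s) = (∑ x', ∑ y', pPI x' y' s) / (Fintype.card Y : ℝ) := by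
    intro b s
    rw [hPIind b s, hPIuniform b]; ring
  have hrel : ∀ a b s, pPI a b s =
      (∑ x', ∑ y', pPI x' y' s) / (∑ x', ∑ y', pE x' y' s) * pE a b s := by
    intro a b s
    have h1 := hmech a b s
    rw [hEys b s, hPIys b s] at h1
    have hE := (hqE s).ne'
    have hPI := (hqPI s).ne'
    field_simp at h1 ⊢
    nlinarith [h1, hcard]
  intro x y
  have hApos : 0 < ∑ y', ∑ s', pE x y' s' :=
    Finset.sum_pos (fun _ _ => Finset.sum_pos (fun _ _ => hEpos _ _ _) huS) huY
  have hBpos : ∀ b, 0 < ∑ s', pE x b s' := fun b =>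
    Finset.sum_pos (fun _ _ => hEpos _ _ _) huS
  have hCpos : ∀ s, 0 < ∑ y', pE x y' s := fun s =>
    Finset.sum_pos (fun _ _ => hEpos _ _ _) huY
  have hkey : ∀ b s, pE x b s =
      (∑ s', pE x b s') * (∑ y', pE x y' s) / (∑ y', ∑ s', pE x y' s') := by
    intro b s
    have h := hEcind x b s
    have hA := hApos.ne'
    field_simp at h ⊢
    nlinarith [h]
  set T : ℝ := ∑ s, (∑ x', ∑ y', pPI x' y' s) / (∑ x', ∑ y', pE x' y' s) * (∑ y', pE x y' s)
    with hT
  have hTpos : 0 < T := by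
    refine Finset.sum_pos (fun s _ => ?_) huS
    exact mul_pos (div_pos (hqPI s) (hqE s)) (hCpos s)
  have hsum1 : ∀ b, (∑ s, pPI x b s) =
      (∑ s', pE x b s') / (∑ y', ∑ s', pE x y' s') * T := by
    intro b
    rw [hT, Finset.mul_sum]
    refine Finset.sum_congr rfl fun s _ => ?_
    rw [hrel x b s, hkey b s]
    ring
  have hsum2 : (∑ y'', ∑ s, pPI x y'' s) = T := by
    have : (∑ y'', ∑ s, pPI x y'' s)
        = (∑ y'', (∑ s', pE x y'' s') / (∑ y', ∑ s', pE x y' s') * T) :=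
      Finset.sum_congr rfl fun b _ => hsum1 b
    rw [this, ← Finset.sum_mul, ← Finset.sum_div, div_self hApos.ne', one_mul]
  rw [hsum1 y, hsum2]
  rw [mul_div_assoc, div_self hTpos.ne', mul_one]
end

section
/- Let μ, ν, κ be probability measures on ℝ such that their convolutions satisfy μ ∗ κ = ν ∗ κ (MeasureTheory.Measure.conv), and such that the characteristic function of κ is nonzero Lebesgue-almost everywhere, i.e. charFun κ t ≠ 0 for volume-a.e. t ∈ ℝ. Then μ = ν. -/
open MeasureTheory Complex
open scoped MeasureTheory

/-- The characteristic function of a measure `κ` on `ℝ`: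
`charFun κ t := ∫ x, exp (i · t · x) ∂κ`. -/
noncomputable def charFun (κ : Measure ℝ) (t : ℝ) : ℂ :=
  ∫ x, Complex.exp (Complex.I * t * x) ∂κ

lemma charFun_eq_measureTheory_charFun (κ : Measure ℝ) :
    _root_.charFun κ = MeasureTheory.charFun κ := by
  ext t
  rw [MeasureTheory.charFun_apply_real]
  simp only [_root_.charFun, mul_comm, mul_left_comm]

/-- `charFun (μ ∗ κ) = charFun μ * charFun κ` lets us cancel `charFun κ` off a `ρ`-null set, and
continuity of characteristic functions upgrades the resulting `ρ`-a.e. equality to equality. -/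
theorem MeasureTheory.Measure.ext_of_conv_eq_of_charFun_ae_ne_zero
    {E : Type*} [NormedAddCommGroup E] [InnerProductSpace ℝ E] [CompleteSpace E]
    [MeasurableSpace E] [BorelSpace E] [SecondCountableTopology E]
    {μ ν κ : Measure E} [IsFiniteMeasure μ] [IsFiniteMeasure ν] [IsFiniteMeasure κ]
    (ρ : Measure E) [ρ.IsOpenPosMeasure]
    (hconv : μ ∗ κ = ν ∗ κ) (hchar : ∀ᵐ t ∂ρ, MeasureTheory.charFun κ t ≠ 0) :
    μ = ν := by
  have hae : MeasureTheory.charFun μ =ᵐ[ρ] MeasureTheory.charFun ν := by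
    filter_upwards [hchar] with t ht
    exact mul_right_cancel₀ ht (by rw [← charFun_conv, ← charFun_conv, hconv])
  exact Measure.ext_of_charFun ((continuous_charFun.ae_eq_iff_eq ρ continuous_charFun).mp hae)

/-- Measure-level deconvolution: if probability measures `μ` and `ν` on `ℝ` have equal
convolutions with a probability measure `κ` whose characteristic function is nonzero
Lebesgue-almost everywhere, then `μ = ν`. -/
theorem measure_eq_of_conv_eq_of_charFun_ae_ne_zero
    (μ ν κ : Measure ℝ)
    [IsProbabilityMeasure μ] [IsProbabilityMeasure ν] [IsProbabilityMeasure κ]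
    (hconv : Measure.conv μ κ = Measure.conv ν κ)
    (hchar : ∀ᵐ t : ℝ ∂volume, _root_.charFun κ t ≠ 0) :
    μ = ν := by
  rw [charFun_eq_measureTheory_charFun] at hchar
  exact Measure.ext_of_conv_eq_of_charFun_ae_ne_zero volume hconv hchar
end

section
/- Let k be a positive natural number and let T : ℝ → EuclideanSpace ℝ (Fin k) be differentiable. Suppose that for every nonzero h ∈ EuclideanSpace ℝ (Fin k), the function x ↦ ⟪T x, h⟫ is not constant on ℝ. Then there exist points x₁, …, x_k ∈ ℝ such that the derivative vectors deriv T x₁, …, deriv T x_k are linearly independent over ℝ. -/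
/-!
If the derivatives `deriv T x` did not span `ℝᵏ`, a nonzero `h` orthogonal to all of them would
make `x ↦ ⟪T x, h⟫` a function with vanishing derivative, hence constant. So they span, and any
spanning family in a `k`-dimensional space contains `k` linearly independent members.
-/

open scoped RealInnerProductSpace

theorem exists_linearIndependent_comp_of_span_eq_top {K V ι : Type*} [DivisionRing K]
    [AddCommGroup V] [Module K V] [FiniteDimensional K V] {n : ℕ}
    (hn : Module.finrank K V = n) {v : ι → V} (hv : Submodule.span K (Set.range v) = ⊤) :
    ∃ f : Fin n → ι, LinearIndependent K (v ∘ f) := by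
  obtain ⟨κ, a, -, hspan, hli⟩ := exists_linearIndependent' K v
  let B : Module.Basis κ K V := Module.Basis.mk hli (by rw [hspan, hv])
  let e : κ ≃ Fin n := B.indexEquiv ((Module.finBasis K V).reindex (finCongr hn))
  exact ⟨a ∘ e.symm, hli.comp e.symm e.symm.injective⟩

section Deriv

variable {E : Type*} [NormedAddCommGroup E] [InnerProductSpace ℝ E]

theorem inner_eq_of_forall_inner_deriv_eq_zero {T : ℝ → E} (hT : Differentiable ℝ T) {h : E}
    (hperp : ∀ x, ⟪deriv T x, h⟫ = 0) (x y : ℝ) : ⟪T x, h⟫ = ⟪T y, h⟫ := by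
  have hder : ∀ t, HasDerivAt (fun t => ⟪T t, h⟫) 0 t := fun t => by
    simpa [hperp t] using (hT t).hasDerivAt.inner ℝ (hasDerivAt_const t h)
  exact is_const_of_deriv_eq_zero (fun t => (hder t).differentiableAt)
    (fun t => (hder t).deriv) x y

theorem span_range_deriv_eq_top [FiniteDimensional ℝ E] {T : ℝ → E} (hT : Differentiable ℝ T)
    (hnc : ∀ h : E, h ≠ 0 → ¬ ∃ c : ℝ, ∀ x : ℝ, ⟪T x, h⟫ = c) :
    Submodule.span ℝ (Set.range (deriv T)) = ⊤ := by
  rw [← Submodule.orthogonal_eq_bot_iff, Submodule.eq_bot_iff]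
  intro h hh
  by_contra h0
  have hperp : ∀ x, ⟪deriv T x, h⟫ = 0 := fun x =>
    (Submodule.mem_orthogonal _ h).1 hh _ (Submodule.subset_span ⟨x, rfl⟩)
  exact hnc h h0 ⟨⟪T 0, h⟫, fun x => inner_eq_of_forall_inner_deriv_eq_zero hT hperp x 0⟩

end Deriv

theorem exists_linearIndependent_deriv_general
    (k : ℕ) (T : ℝ → EuclideanSpace ℝ (Fin k))
    (hdiff : Differentiable ℝ T)
    (hnc : ∀ h : EuclideanSpace ℝ (Fin k), h ≠ 0 →
      ¬ ∃ c : ℝ, ∀ x : ℝ, ⟪T x, h⟫ = c) :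
    ∃ x : Fin k → ℝ, LinearIndependent ℝ (fun i => deriv T (x i)) := by
  obtain ⟨x, hx⟩ := exists_linearIndependent_comp_of_span_eq_top finrank_euclideanSpace_fin
    (span_range_deriv_eq_top hdiff hnc)
  exact ⟨x, hx⟩

/-- Strong exponentiality yields linearly independent Jacobian columns: if
`T : ℝ → ℝᵏ` is differentiable and for every nonzero `h` the function
`x ↦ ⟪T x, h⟫` is not constant, then there exist `k` points at which the
derivative vectors of `T` are linearly independent. -/
theorem exists_linearIndependent_deriv
    (k : ℕ) (hk : 0 < k) (T : ℝ → EuclideanSpace ℝ (Fin k))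
    (hdiff : Differentiable ℝ T)
    (hnc : ∀ h : EuclideanSpace ℝ (Fin k), h ≠ 0 →
      ¬ ∃ c : ℝ, ∀ x : ℝ, ⟪T x, h⟫ = c) :
    ∃ x : Fin k → ℝ, LinearIndependent ℝ (fun i => deriv T (x i)) :=
  exists_linearIndependent_deriv_general k T hdiff hnc
end

section
/- Let Z be a type and m a positive natural number. Let u, v : Z → EuclideanSpace ℝ (Fin m), let λ λ' : Fin (m+1) → EuclideanSpace ℝ (Fin m), and let c : Fin m → ℝ. Suppose that for all z ∈ Z and all l : Fin m, ⟪u z, λ (l+1) − λ 0⟫ = ⟪v z, λ' (l+1) − λ' 0⟫ + c l, and suppose the m × m matrix L whose l-th column is λ (l+1) − λ 0 is invertible. Then there exist a linear map A : EuclideanSpace ℝ (Fin m) → EuclideanSpace ℝ (Fin m) and a vector d ∈ EuclideanSpace ℝ (Fin m) such that u z = A (v z) + d for all z ∈ Z. -/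
/-! Pairing with the columns of an invertible matrix is an injective linear map, hence has a linear
left inverse; applying that inverse to the system expresses `u z` affinely in `v z`. -/

open scoped RealInnerProductSpace

theorem exists_eq_linearMap_add_of_injective {K E F G Z : Type*} [Field K]
    [AddCommGroup E] [Module K E] [AddCommGroup F] [Module K F] [AddCommGroup G] [Module K G]
    {Φ : E →ₗ[K] G} (hΦ : Function.Injective Φ) (Ψ : F →ₗ[K] G) (c : G) {u : Z → E}
    {v : Z → F} (h : ∀ z, Φ (u z) = Ψ (v z) + c) :
    ∃ (A : F →ₗ[K] E) (d : E), ∀ z, u z = A (v z) + d := by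
  obtain ⟨Φ', hΦ'⟩ := Φ.exists_leftInverse_of_injective (LinearMap.ker_eq_bot.mpr hΦ)
  refine ⟨Φ' ∘ₗ Ψ, Φ' c, fun z => ?_⟩
  rw [LinearMap.comp_apply, ← map_add, ← h z, ← LinearMap.comp_apply, hΦ', LinearMap.id_apply]

theorem EuclideanSpace.injective_inner_of_isUnit {ι : Type*} [Fintype ι] [DecidableEq ι]
    {w : ι → EuclideanSpace ℝ ι} (hw : IsUnit (Matrix.of fun i l => w l i)) :
    Function.Injective fun (x : EuclideanSpace ℝ ι) l => ⟪x, w l⟫ := by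
  have hinner : ∀ x : EuclideanSpace ℝ ι,
      (fun l => ⟪x, w l⟫) = Matrix.vecMul x.ofLp (Matrix.of fun i l => w l i) := by
    intro x
    funext l
    simp [EuclideanSpace.inner_eq_star_dotProduct, Matrix.vecMul, dotProduct_comm]
  intro x y hxy
  simp only [hinner] at hxy
  exact WithLp.ofLp_injective 2 (Matrix.vecMul_injective_iff_isUnit.mpr hw hxy)

theorem affine_of_inner_system_general
    {Z : Type*} (m : ℕ)
    (u v : Z → EuclideanSpace ℝ (Fin m))
    (lam lam' : Fin (m + 1) → EuclideanSpace ℝ (Fin m))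
    (c : Fin m → ℝ)
    (heq : ∀ z : Z, ∀ l : Fin m,
      ⟪u z, lam l.succ - lam 0⟫ = ⟪v z, lam' l.succ - lam' 0⟫ + c l)
    (hL : IsUnit (Matrix.of fun (i l : Fin m) => (lam l.succ - lam 0) i)) :
    ∃ (A : EuclideanSpace ℝ (Fin m) →ₗ[ℝ] EuclideanSpace ℝ (Fin m))
      (d : EuclideanSpace ℝ (Fin m)),
      ∀ z : Z, u z = A (v z) + d :=
  exists_eq_linearMap_add_of_injective
    (Φ := LinearMap.pi fun l => (innerₗ _).flip (lam l.succ - lam 0))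
    (EuclideanSpace.injective_inner_of_isUnit hL)
    (LinearMap.pi fun l => (innerₗ _).flip (lam' l.succ - lam' 0)) c
    fun z => funext (heq z)

/-- Linear-system step of the identifiability proof: if
`⟪u z, λ(l+1) − λ 0⟫ = ⟪v z, λ'(l+1) − λ' 0⟫ + c l` for all `z` and `l`, and the
matrix whose `l`-th column is `λ(l+1) − λ 0` is invertible, then `u` is an affine
function of `v`: `u z = A (v z) + d`. -/
theorem affine_of_inner_system
    {Z : Type*} (m : ℕ) (hm : 0 < m)
    (u v : Z → EuclideanSpace ℝ (Fin m))
    (lam lam' : Fin (m + 1) → EuclideanSpace ℝ (Fin m))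
    (c : Fin m → ℝ)
    (heq : ∀ z : Z, ∀ l : Fin m,
      ⟪u z, lam l.succ - lam 0⟫ = ⟪v z, lam' l.succ - lam' 0⟫ + c l)
    (hL : IsUnit (Matrix.of fun (i l : Fin m) => (lam l.succ - lam 0) i)) :
    ∃ (A : EuclideanSpace ℝ (Fin m) →ₗ[ℝ] EuclideanSpace ℝ (Fin m))
      (d : EuclideanSpace ℝ (Fin m)),
      ∀ z : Z, u z = A (v z) + d :=
  affine_of_inner_system_general m u v lam lam' c heq hL
end

section
/- Let S and Y be nonempty finite types and p a full-support pmf on S × Y. Define the propensity vector mi : S → (Y → ℝ) by mi s := (y ↦ p(y|s)). Then mi is a balancing score for p: for all s ∈ S and y ∈ Y, p(y|s) = p(y | mi = mi(s)), i.e. the label Y is conditionally independent of the covariate S given the propensity vector mi(S). -/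
open Finset

open Classical in
/-- The propensity vector `mi s := (y ↦ p(y∣s))` is a balancing score: the label is
conditionally independent of the covariate given the propensity vector, i.e.
`p(y∣s) = p(y ∣ mi = mi(s))` for all `s` and `y`. -/
theorem propensity_vector_is_balancing_score
    {S Y : Type*} [Fintype S] [Fintype Y] [Nonempty S] [Nonempty Y]
    (p : S → Y → ℝ) (hpos : ∀ s y, 0 < p s y)
    (hsum : ∑ s, ∑ y, p s y = 1) :
    ∀ s y, p s y / (∑ y', p s y') =
      (∑ s' ∈ Finset.univ.filter (fun s' =>
          (fun y'' => p s' y'' / ∑ y', p s' y') =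
            (fun y'' => p s y'' / ∑ y', p s y')), p s' y) /
        (∑ s' ∈ Finset.univ.filter (fun s' =>
          (fun y'' => p s' y'' / ∑ y', p s' y') =
            (fun y'' => p s y'' / ∑ y', p s y')), ∑ y', p s' y') := by
  intro s y
  set T := Finset.univ.filter (fun s' =>
      (fun y'' => p s' y'' / ∑ y', p s' y') =
        (fun y'' => p s y'' / ∑ y', p s y')) with hT
  have hsumpos : ∀ s', (0:ℝ) < ∑ y', p s' y' :=
    fun s' => Finset.sum_pos (fun y' _ => hpos s' y') Finset.univ_nonempty
  have hnum : ∑ s' ∈ T, p s' y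
      = (p s y / ∑ y', p s y') * ∑ s' ∈ T, ∑ y', p s' y' := by
    rw [Finset.mul_sum]
    refine Finset.sum_congr rfl fun s' hs' => ?_
    have h := (Finset.mem_filter.mp hs').2
    have h2 : p s' y / ∑ y', p s' y' = p s y / ∑ y', p s y' := congrFun h y
    rw [div_eq_div_iff (hsumpos s').ne' (hsumpos s).ne'] at h2
    rw [div_mul_eq_mul_div, eq_div_iff (hsumpos s).ne']
    linarith
  have hdpos : (0:ℝ) < ∑ s' ∈ T, ∑ y', p s' y' := by
    refine Finset.sum_pos (fun s' _ => hsumpos s') ⟨s, ?_⟩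
    simp [hT]
  rw [hnum, mul_div_assoc, div_self hdpos.ne', mul_one]
end

section
/- Let S and Y be nonempty finite types, p a full-support pmf on S × Y, B a type and b : S → B. Suppose there exists ψ : B → (Y → ℝ) such that the propensity vector factors through b, i.e. p(y|s) = ψ (b s) y for all s ∈ S and y ∈ Y. Then b is a balancing score for p: p(y|s) = p(y | b = b(s)) for all s ∈ S and y ∈ Y. -/
open Finset

/-- Sufficient condition for a balancing score: if the propensity vector `y ↦ p(y∣s)`
factors through `b`, i.e. `p(y∣s) = ψ(b(s))(y)`, then `b` is a balancing score:
`p(y∣s) = p(y ∣ b = b(s))` for all `s` and `y`. -/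
theorem balancing_score_of_propensity_factors
    {S Y B : Type*} [Fintype S] [Fintype Y] [Nonempty S] [Nonempty Y]
    [DecidableEq B]
    (p : S → Y → ℝ) (hpos : ∀ s y, 0 < p s y)
    (hsum : ∑ s, ∑ y, p s y = 1)
    (b : S → B) (ψ : B → Y → ℝ)
    (hfact : ∀ s y, p s y / (∑ y', p s y') = ψ (b s) y) :
    ∀ s y, p s y / (∑ y', p s y') =
      (∑ s' ∈ Finset.univ.filter (fun s' => b s' = b s), p s' y) /
        (∑ s' ∈ Finset.univ.filter (fun s' => b s' = b s), ∑ y', p s' y') := by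
  intro s y
  have hden : ∀ s', 0 < ∑ y', p s' y' := fun s' =>
    Finset.sum_pos (fun y _ => hpos s' y) Finset.univ_nonempty
  have key : ∀ s', p s' y = ψ (b s') y * ∑ y', p s' y' := fun s' =>
    (div_eq_iff (ne_of_gt (hden s'))).mp (hfact s' y)
  have hnum : (∑ s' ∈ Finset.univ.filter (fun s' => b s' = b s), p s' y)
      = ψ (b s) y * ∑ s' ∈ Finset.univ.filter (fun s' => b s' = b s), ∑ y', p s' y' := by
    rw [Finset.mul_sum]
    apply Finset.sum_congr rfl
    intro s' hs'
    rw [key s', (Finset.mem_filter.mp hs').2]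
  have hdpos : 0 < ∑ s' ∈ Finset.univ.filter (fun s' => b s' = b s), ∑ y', p s' y' :=
    Finset.sum_pos (fun s' _ => hden s') ⟨s, Finset.mem_filter.mpr ⟨Finset.mem_univ s, rfl⟩⟩
  rw [hnum, mul_div_assoc, div_self (ne_of_gt hdpos), mul_one, hfact]
end

section
/- Let S and Y be nonempty finite types, p̂ a full-support pmf on S × Y, and b : S → B a function into a type B. Suppose b is a balancing score for p̂, and suppose the conditional label distribution given the balancing score is the same across all attained score values: for every y ∈ Y the value p̂(y | b = b(s)) does not depend on s ∈ S. Then the label and the covariate are independent under p̂: for all s ∈ S and y ∈ Y, p̂(s,y) = (∑_{y'} p̂(s,y')) · (∑_{s'} p̂(s',y)). (This is the content of the claim that a mini-batch obtained by perfect balancing-score matching is sampled from a post-intervention distribution in which the spurious variable and the label are independent.) -/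
open Finset

/-- If `b` is a balancing score for `p̂` and the conditional label distribution given
the balancing score is the same across all attained score values, then the label and
the covariate are independent under `p̂`: a mini-batch obtained by perfect
balancing-score matching is sampled from a post-intervention distribution in which
the spurious variable and the label are independent. -/
theorem indep_of_balancing_score_matching
    {S Y B : Type*} [Fintype S] [Fintype Y] [Nonempty S] [Nonempty Y]
    [DecidableEq B]
    (phat : S → Y → ℝ)
    (hpos : ∀ s y, 0 < phat s y) (hsum : ∑ s, ∑ y, phat s y = 1)
    (b : S → B)
    -- b is a balancing score for p̂
    (hbal : ∀ s y, phat s y / (∑ y', phat s y') =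
      (∑ s' ∈ Finset.univ.filter (fun s' => b s' = b s), phat s' y) /
        (∑ s' ∈ Finset.univ.filter (fun s' => b s' = b s), ∑ y', phat s' y'))
    -- the conditional label distribution given the score does not depend on s
    (hconst : ∀ y, ∀ s₁ s₂ : S,
      (∑ s' ∈ Finset.univ.filter (fun s' => b s' = b s₁), phat s' y) /
          (∑ s' ∈ Finset.univ.filter (fun s' => b s' = b s₁), ∑ y', phat s' y') =
        (∑ s' ∈ Finset.univ.filter (fun s' => b s' = b s₂), phat s' y) /
          (∑ s' ∈ Finset.univ.filter (fun s' => b s' = b s₂), ∑ y', phat s' y')) :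
    ∀ s y, phat s y = (∑ y', phat s y') * (∑ s', phat s' y) := by
  have hf : ∀ t : S, 0 < ∑ y', phat t y' := fun t =>
    Finset.sum_pos (fun y _ => hpos t y) Finset.univ_nonempty
  intro s y
  have key : ∀ s₁ s₂ : S, phat s₁ y / (∑ y', phat s₁ y') = phat s₂ y / (∑ y', phat s₂ y') :=
    fun s₁ s₂ => by rw [hbal, hbal]; exact hconst y s₁ s₂
  have hcol : ∑ s', phat s' y = phat s y / (∑ y', phat s y') := by
    calc ∑ s', phat s' y
        = ∑ s', (phat s y / (∑ y', phat s y')) * (∑ y', phat s' y') := by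
          refine Finset.sum_congr rfl fun t _ => ?_
          rw [← key t s, div_mul_eq_mul_div, mul_div_assoc, div_self (hf t).ne', mul_one]
      _ = (phat s y / (∑ y', phat s y')) * ∑ s', ∑ y', phat s' y' := by
          rw [Finset.mul_sum]
      _ = phat s y / (∑ y', phat s y') := by rw [hsum, mul_one]
  rw [hcol, mul_div_assoc', mul_comm, mul_div_assoc, div_self (hf s).ne', mul_one]
end
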